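/- arXiv:2502.20569 — 2 statements merged into one kernel-verified Lean document; each statement's English description precedes it below -/
import Mathlib

section
/- For any integers a, b, c, d ≥ 0 and T ≥ 28, one has ∫_{14}^{T−14} u^a (T−u)^b (log u)^c (log(T−u))^d du = (a! b! / (a+b+1)!) · T^{a+b+1} (log T)^{c+d} · (1 + O(log log T / log T)), where the implied constant depends only on a, b, c, d. -/
/-!
Write `g(u) = u^a (T-u)^b` and `L = log T`. On `[s, T-s]` with `s ≥ 1` both `log u` and
`log (T-u)` lie in `[0, L]`, so the integral is at most `L^(c+d) ∫ g`, and `∫ g` falls short of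
the beta integral `∫₀ᵀ g = a! b! / (a+b+1)! · T^(a+b+1)` only by two tails of size `≤ s T^(a+b)`.
In the other direction `L (L^(c+d) - x^c y^d) ≤ L^(c+d) (c (L-x) + d (L-y))`, and the weighted
defects `∫ g · log (T/u)` are `O(T^(a+b+1))` since `∫₀ᵀ u^a log (T/u) du = T^(a+1)/(a+1)²`.
So the error is even `O(T^(a+b+1) L^(c+d-1))`; the factor `log log T ≥ 1` is spent only at the end.
-/

open Real intervalIntegral Set

theorem integral_pow_succ_mul_sub_pow (a b : ℕ) (T : ℝ) :
    (a + 1 : ℝ) * ∫ u in (0:ℝ)..T, u ^ a * (T - u) ^ (b + 1) =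
      (b + 1 : ℝ) * ∫ u in (0:ℝ)..T, u ^ (a + 1) * (T - u) ^ b := by
  have hderiv (u : ℝ) : HasDerivAt (fun u => u ^ (a + 1) * (T - u) ^ (b + 1))
      ((a + 1 : ℝ) * (u ^ a * (T - u) ^ (b + 1)) - (b + 1 : ℝ) * (u ^ (a + 1) * (T - u) ^ b))
      u :=
    ((hasDerivAt_pow (a + 1) u).fun_mul
      (((hasDerivAt_id' u).const_sub T).fun_pow (b + 1))).congr_deriv (by push_cast; ring)
  have hftc := integral_eq_sub_of_hasDerivAt (fun u _ => hderiv u)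
    ((by fun_prop : Continuous _).intervalIntegrable 0 T)
  rw [integral_sub ((by fun_prop : Continuous _).intervalIntegrable 0 T)
    ((by fun_prop : Continuous _).intervalIntegrable 0 T), integral_const_mul,
    integral_const_mul] at hftc
  simpa [sub_eq_zero] using hftc

theorem integral_pow_mul_sub_pow (a b : ℕ) (T : ℝ) :
    ∫ u in (0:ℝ)..T, u ^ a * (T - u) ^ b =
      (a.factorial : ℝ) * b.factorial / (a + b + 1).factorial * T ^ (a + b + 1) := by
  induction b generalizing a with
  | zero =>
    rw [add_zero, Nat.factorial_succ, Nat.factorial_zero]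
    simp only [pow_zero, mul_one, integral_pow]
    field_simp
    push_cast
    ring
  | succ b ih =>
    have h := integral_pow_succ_mul_sub_pow a b T
    rw [ih, show a + 1 + b + 1 = a + (b + 1) + 1 by ring, Nat.factorial_succ a] at h
    rw [Nat.factorial_succ b]
    push_cast at h ⊢
    field_simp at h ⊢
    linarith

theorem integral_pow_mul_log_sub_log_le (a : ℕ) {s T : ℝ} (hs : 0 < s) (hsT : s ≤ T) :
    ∫ u in s..T, u ^ a * (log T - log u) ≤ T ^ (a + 1) / (a + 1) ^ 2 := by
  have hpos : ∀ u ∈ uIcc s T, 0 < u := fun u hu => hs.trans_le (uIcc_of_le hsT ▸ hu).1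
  set F : ℝ → ℝ := fun u => u ^ (a + 1) * ((log T - log u) / (a + 1) + 1 / (a + 1) ^ 2)
  have hderiv : ∀ u ∈ uIcc s T, HasDerivAt F (u ^ a * (log T - log u)) u := by
    intro u hu
    have hu₀ := (hpos u hu).ne'
    refine ((hasDerivAt_pow (a + 1) u).fun_mul ((((hasDerivAt_log hu₀).const_sub
      (log T)).div_const (a + 1)).add_const _)).congr_deriv ?_
    field_simp
    push_cast
    ring
  have hcont : ContinuousOn (fun u => u ^ a * (log T - log u)) (uIcc s T) :=
    (continuousOn_pow a).mul (continuousOn_const.sub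
      (continuousOn_log.mono fun u hu => (hpos u hu).ne'))
  rw [integral_eq_sub_of_hasDerivAt hderiv hcont.intervalIntegrable]
  have hFT : F T = T ^ (a + 1) / (a + 1) ^ 2 := by simp only [F]; ring
  have hFs : 0 ≤ F s := by
    have := sub_nonneg.2 (log_le_log hs hsT)
    positivity
  linarith

theorem mul_pow_sub_pow_le (n : ℕ) {x L : ℝ} (hx : 0 ≤ x) (hxL : x ≤ L) :
    L * (L ^ n - x ^ n) ≤ n * L ^ n * (L - x) := by
  induction n with
  | zero => simp
  | succ n ih =>
    have hxn : x ^ n ≤ L ^ n := pow_le_pow_left₀ hx hxL n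
    have hL : 0 ≤ L := hx.trans hxL
    calc L * (L ^ (n + 1) - x ^ (n + 1))
        = L * (L * (L ^ n - x ^ n)) + L * x ^ n * (L - x) := by ring
      _ ≤ L * (n * L ^ n * (L - x)) + L * L ^ n * (L - x) := by gcongr
      _ = (n + 1 : ℕ) * L ^ (n + 1) * (L - x) := by push_cast; ring

theorem mul_pow_add_sub_pow_mul_pow_le (c d : ℕ) {x y L : ℝ} (hx : 0 ≤ x) (hxL : x ≤ L)
    (hy : 0 ≤ y) (hyL : y ≤ L) :
    L * (L ^ (c + d) - x ^ c * y ^ d) ≤ L ^ (c + d) * (c * (L - x) + d * (L - y)) := by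
  have hL : 0 ≤ L := hx.trans hxL
  have hyd : 0 ≤ L * (L ^ d - y ^ d) :=
    mul_nonneg hL (sub_nonneg.2 (pow_le_pow_left₀ hy hyL d))
  calc L * (L ^ (c + d) - x ^ c * y ^ d)
      = L ^ d * (L * (L ^ c - x ^ c)) + x ^ c * (L * (L ^ d - y ^ d)) := by ring
    _ ≤ L ^ d * (c * L ^ c * (L - x)) + L ^ c * (d * L ^ d * (L - y)) :=
        add_le_add (mul_le_mul_of_nonneg_left (mul_pow_sub_pow_le c hx hxL) (by positivity))
          (mul_le_mul (pow_le_pow_left₀ hx hxL c) (mul_pow_sub_pow_le d hy hyL) hyd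
            (by positivity))
    _ = L ^ (c + d) * (c * (L - x) + d * (L - y)) := by ring

theorem log_mem_Icc_of_mem_Icc {s T u : ℝ} (hs : 1 ≤ s) (hu : u ∈ Icc s (T - s)) :
    log u ∈ Icc 0 (log T) ∧ log (T - u) ∈ Icc 0 (log T) :=
  ⟨⟨log_nonneg (hs.trans hu.1), log_le_log (by linarith [hu.1]) (by linarith [hu.2])⟩,
    ⟨log_nonneg (by linarith [hu.2]), log_le_log (by linarith [hu.2]) (by linarith [hu.1])⟩⟩

section

variable (a b : ℕ) {s T : ℝ}

theorem pow_mul_sub_pow_nonneg {u : ℝ} (hu : u ∈ Icc 0 T) : 0 ≤ u ^ a * (T - u) ^ b :=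
  mul_nonneg (pow_nonneg hu.1 a) (pow_nonneg (sub_nonneg.2 hu.2) b)

theorem pow_mul_sub_pow_le {u : ℝ} (hu : u ∈ Icc 0 T) :
    u ^ a * (T - u) ^ b ≤ T ^ (a + b) := by
  have hT : 0 ≤ T := hu.1.trans hu.2
  rw [pow_add]
  exact mul_le_mul (pow_le_pow_left₀ hu.1 hu.2 a)
    (pow_le_pow_left₀ (by linarith [hu.2]) (by linarith [hu.1]) b)
    (pow_nonneg (sub_nonneg.2 hu.2) b) (by positivity)

theorem integral_pow_mul_sub_pow_mem_Icc {x y : ℝ} (hx : 0 ≤ x) (hxy : x ≤ y)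
    (hyT : y ≤ T) :
    ∫ u in x..y, u ^ a * (T - u) ^ b ∈ Icc 0 ((y - x) * T ^ (a + b)) := by
  have hu : ∀ u ∈ Icc x y, u ∈ Icc 0 T := fun u hu => ⟨hx.trans hu.1, hu.2.trans hyT⟩
  refine ⟨integral_nonneg hxy fun u h => pow_mul_sub_pow_nonneg a b (hu u h), ?_⟩
  simpa using integral_mono_on hxy ((by fun_prop : Continuous _).intervalIntegrable x y)
    (intervalIntegrable_const (μ := MeasureTheory.volume))
    fun u h => pow_mul_sub_pow_le a b (hu u h)

theorem integral_sub_integral_pow_mul_sub_pow_mem_Icc (hs : 0 ≤ s) (hsT : s ≤ T - s) :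
    (∫ u in (0:ℝ)..T, u ^ a * (T - u) ^ b) - ∫ u in s..T - s, u ^ a * (T - u) ^ b ∈
      Icc 0 (2 * s * T ^ (a + b)) := by
  have hint (x y : ℝ) :
      IntervalIntegrable (fun u => u ^ a * (T - u) ^ b) MeasureTheory.volume x y :=
    (by fun_prop : Continuous _).intervalIntegrable x y
  rw [← integral_add_adjacent_intervals (hint 0 s) (hint s T),
    ← integral_add_adjacent_intervals (hint s (T - s)) (hint (T - s) T)]
  obtain ⟨h₁, h₁'⟩ := integral_pow_mul_sub_pow_mem_Icc a b le_rfl hs (by linarith)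
  obtain ⟨h₂, h₂'⟩ :=
    integral_pow_mul_sub_pow_mem_Icc a b (x := T - s) (T := T) (by linarith) (by linarith) le_rfl
  constructor <;> linarith

theorem integral_pow_mul_sub_pow_mul_log_sub_log_le (hs : 0 < s) (hsT : s ≤ T - s) :
    ∫ u in s..T - s, u ^ a * (T - u) ^ b * (log T - log u) ≤ T ^ (a + b + 1) := by
  have hT : 0 ≤ T := by linarith
  have hnonneg : ∀ u ∈ Icc s T, 0 ≤ u ^ a * (log T - log u) := fun u hu => by
    have hu₀ := hs.trans_le hu.1
    have := sub_nonneg.2 (log_le_log hu₀ hu.2)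
    positivity
  calc ∫ u in s..T - s, u ^ a * (T - u) ^ b * (log T - log u)
      ≤ ∫ u in s..T - s, T ^ b * (u ^ a * (log T - log u)) := by
        refine integral_mono_on hsT ?_ ?_ fun u hu => ?_
        · exact ContinuousOn.intervalIntegrable_of_Icc hsT
            (by fun_prop (disch := intro u hu; apply ne_of_gt; linarith [hu.1, hu.2]))
        · exact ContinuousOn.intervalIntegrable_of_Icc hsT
            (by fun_prop (disch := intro u hu; apply ne_of_gt; linarith [hu.1, hu.2]))
        · rw [mul_right_comm, mul_comm]
          exact mul_le_mul_of_nonneg_right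
            (pow_le_pow_left₀ (by linarith [hu.2]) (by linarith [hu.1]) b)
            (hnonneg u ⟨hu.1, by linarith [hu.2]⟩)
    _ ≤ ∫ u in s..T, T ^ b * (u ^ a * (log T - log u)) := by
        refine integral_mono_interval le_rfl hsT (by linarith) ?_ ?_
        · filter_upwards [MeasureTheory.ae_restrict_mem measurableSet_Ioc] with u hu
          exact mul_nonneg (by positivity) (hnonneg u (Ioc_subset_Icc_self hu))
        · exact ContinuousOn.intervalIntegrable_of_Icc (by linarith)
            (by fun_prop (disch := intro u hu; apply ne_of_gt; linarith [hu.1, hu.2]))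
    _ = T ^ b * ∫ u in s..T, u ^ a * (log T - log u) := integral_const_mul _ _
    _ ≤ T ^ b * (T ^ (a + 1) / (a + 1) ^ 2) :=
        mul_le_mul_of_nonneg_left (integral_pow_mul_log_sub_log_le a hs (by linarith))
          (by positivity)
    _ ≤ T ^ (a + b + 1) := by
        rw [mul_div_assoc', ← pow_add, show b + (a + 1) = a + b + 1 by ring]
        exact div_le_self (by positivity) (one_le_pow₀ (by linarith))

theorem integral_pow_mul_sub_pow_mul_log_sub_log_sub_le (hs : 0 < s) (hsT : s ≤ T - s) :
    ∫ u in s..T - s, u ^ a * (T - u) ^ b * (log T - log (T - u)) ≤ T ^ (a + b + 1) :=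
  calc ∫ u in s..T - s, u ^ a * (T - u) ^ b * (log T - log (T - u))
      = ∫ u in s..T - s, (T - u) ^ b * (T - (T - u)) ^ a * (log T - log (T - u)) := by
        simp only [sub_sub_cancel, mul_comm]
    _ = ∫ u in s..T - s, u ^ b * (T - u) ^ a * (log T - log u) := by
        rw [integral_comp_sub_left (fun v => v ^ b * (T - v) ^ a * (log T - log v)),
          sub_sub_cancel]
    _ ≤ T ^ (a + b + 1) := add_comm a b ▸ integral_pow_mul_sub_pow_mul_log_sub_log_le b a hs hsT

end

section

variable (a b c d : ℕ) {s T : ℝ}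

theorem integral_pow_mul_log_pow_le (hs : 1 ≤ s) (hsT : s ≤ T - s) :
    ∫ u in s..T - s, u ^ a * (T - u) ^ b * log u ^ c * log (T - u) ^ d ≤
      log T ^ (c + d) * ∫ u in s..T - s, u ^ a * (T - u) ^ b := by
  have hpt : ∀ u ∈ Icc s (T - s), u ^ a * (T - u) ^ b * log u ^ c * log (T - u) ^ d ≤
      log T ^ (c + d) * (u ^ a * (T - u) ^ b) := fun u hu => by
    obtain ⟨⟨hx₀, hxT⟩, ⟨hy₀, hyT⟩⟩ := log_mem_Icc_of_mem_Icc hs hu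
    have hu' : u ∈ Icc 0 T := ⟨by linarith [hu.1], by linarith [hu.2]⟩
    have := pow_mul_sub_pow_nonneg a b hu'
    have := hx₀.trans hxT
    calc u ^ a * (T - u) ^ b * log u ^ c * log (T - u) ^ d
        = u ^ a * (T - u) ^ b * (log u ^ c * log (T - u) ^ d) := by ring
      _ ≤ u ^ a * (T - u) ^ b * (log T ^ c * log T ^ d) := by gcongr
      _ = log T ^ (c + d) * (u ^ a * (T - u) ^ b) := by ring
  rw [← integral_const_mul]
  refine integral_mono_on hsT ?_ ?_ hpt
  all_goals refine ContinuousOn.intervalIntegrable_of_Icc hsT ?_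
  all_goals fun_prop (disch := intro u hu; apply ne_of_gt; linarith [hu.1, hu.2])

theorem log_mul_sub_integral_pow_mul_log_pow_le (hs : 1 ≤ s) (hsT : s ≤ T - s) :
    log T * (log T ^ (c + d) * (∫ u in s..T - s, u ^ a * (T - u) ^ b) -
        ∫ u in s..T - s, u ^ a * (T - u) ^ b * log u ^ c * log (T - u) ^ d) ≤
      (c + d) * log T ^ (c + d) * T ^ (a + b + 1) := by
  have hpt : ∀ u ∈ Icc s (T - s), log T * (log T ^ (c + d) * (u ^ a * (T - u) ^ b) -
      u ^ a * (T - u) ^ b * log u ^ c * log (T - u) ^ d) ≤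
      log T ^ (c + d) * (c * (u ^ a * (T - u) ^ b * (log T - log u)) +
        d * (u ^ a * (T - u) ^ b * (log T - log (T - u)))) := fun u hu => by
    obtain ⟨⟨hx₀, hxT⟩, ⟨hy₀, hyT⟩⟩ := log_mem_Icc_of_mem_Icc hs hu
    have hu' : u ∈ Icc 0 T := ⟨by linarith [hu.1], by linarith [hu.2]⟩
    have := pow_mul_sub_pow_nonneg a b hu'
    linear_combination
      mul_le_mul_of_nonneg_left (mul_pow_add_sub_pow_mul_pow_le c d hx₀ hxT hy₀ hyT) this
  have hm₁ := integral_pow_mul_sub_pow_mul_log_sub_log_le a b (by linarith) hsT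
  have hm₂ := integral_pow_mul_sub_pow_mul_log_sub_log_sub_le a b (by linarith) hsT
  have hL : 0 ≤ log T := log_nonneg (by linarith)
  calc log T * (log T ^ (c + d) * (∫ u in s..T - s, u ^ a * (T - u) ^ b) -
        ∫ u in s..T - s, u ^ a * (T - u) ^ b * log u ^ c * log (T - u) ^ d)
      = ∫ u in s..T - s, log T * (log T ^ (c + d) * (u ^ a * (T - u) ^ b) -
          u ^ a * (T - u) ^ b * log u ^ c * log (T - u) ^ d) := by
        rw [integral_const_mul, integral_sub, integral_const_mul]
        all_goals refine ContinuousOn.intervalIntegrable_of_Icc hsT ?_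
        all_goals fun_prop (disch := intro u hu; apply ne_of_gt; linarith [hu.1, hu.2])
    _ ≤ ∫ u in s..T - s, log T ^ (c + d) * (c * (u ^ a * (T - u) ^ b * (log T - log u)) +
          d * (u ^ a * (T - u) ^ b * (log T - log (T - u)))) := by
        refine integral_mono_on hsT ?_ ?_ hpt
        all_goals refine ContinuousOn.intervalIntegrable_of_Icc hsT ?_
        all_goals fun_prop (disch := intro u hu; apply ne_of_gt; linarith [hu.1, hu.2])
    _ = log T ^ (c + d) * (c * (∫ u in s..T - s, u ^ a * (T - u) ^ b * (log T - log u)) +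
          d * ∫ u in s..T - s, u ^ a * (T - u) ^ b * (log T - log (T - u))) := by
        rw [integral_const_mul, integral_add, integral_const_mul, integral_const_mul]
        all_goals refine ContinuousOn.intervalIntegrable_of_Icc hsT ?_
        all_goals fun_prop (disch := intro u hu; apply ne_of_gt; linarith [hu.1, hu.2])
    _ ≤ log T ^ (c + d) * (c * T ^ (a + b + 1) + d * T ^ (a + b + 1)) := by gcongr
    _ = (c + d) * log T ^ (c + d) * T ^ (a + b + 1) := by ring

theorem abs_integral_pow_mul_log_pow_sub_le (hs : 1 ≤ s) (hsT : s ≤ T - s) :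
    |(∫ u in s..T - s, u ^ a * (T - u) ^ b * log u ^ c * log (T - u) ^ d) -
        (a.factorial : ℝ) * b.factorial / (a + b + 1).factorial * T ^ (a + b + 1) *
          log T ^ (c + d)| ≤
      (2 * s + c + d) * T ^ (a + b + 1) * log T ^ (c + d) / log T := by
  have hL : 0 < log T := log_pos (by linarith)
  have hLT : T ^ (a + b) * log T ≤ T ^ (a + b + 1) := by
    rw [pow_succ]
    exact mul_le_mul_of_nonneg_left (log_le_self (by linarith)) (pow_nonneg (by linarith) _)
  obtain ⟨htail₀, htail⟩ :=
    integral_sub_integral_pow_mul_sub_pow_mem_Icc a b (by linarith) hsT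
  rw [integral_pow_mul_sub_pow] at htail₀ htail
  have hupper := integral_pow_mul_log_pow_le a b c d hs hsT
  have hmid := log_mul_sub_integral_pow_mul_log_pow_le a b c d hs hsT
  set I := ∫ u in s..T - s, u ^ a * (T - u) ^ b * log u ^ c * log (T - u) ^ d
  set J := ∫ u in s..T - s, u ^ a * (T - u) ^ b
  set B := (a.factorial : ℝ) * b.factorial / (a + b + 1).factorial
  set L := log T
  have hIB : I ≤ B * T ^ (a + b + 1) * L ^ (c + d) :=
    calc I ≤ L ^ (c + d) * J := hupper
      _ ≤ L ^ (c + d) * (B * T ^ (a + b + 1)) := by gcongr; linarith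
      _ = B * T ^ (a + b + 1) * L ^ (c + d) := by ring
  rw [abs_sub_comm, abs_of_nonneg (by linarith), le_div_iff₀ hL]
  calc (B * T ^ (a + b + 1) * L ^ (c + d) - I) * L
      = L ^ (c + d) * ((B * T ^ (a + b + 1) - J) * L) + L * (L ^ (c + d) * J - I) := by ring
    _ ≤ L ^ (c + d) * (2 * s * T ^ (a + b) * L) + (c + d) * L ^ (c + d) * T ^ (a + b + 1) :=
        add_le_add (mul_le_mul_of_nonneg_left (mul_le_mul_of_nonneg_right htail hL.le)
          (by positivity)) hmid
    _ = L ^ (c + d) * (2 * s * (T ^ (a + b) * L)) + (c + d) * L ^ (c + d) * T ^ (a + b + 1) := by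
        ring
    _ ≤ L ^ (c + d) * (2 * s * T ^ (a + b + 1)) + (c + d) * L ^ (c + d) * T ^ (a + b + 1) := by
        gcongr
    _ = (2 * s + c + d) * T ^ (a + b + 1) * L ^ (c + d) := by ring

end

theorem one_le_log_log {T : ℝ} (hT : 28 ≤ T) : 1 ≤ log (log T) := by
  have hexp3 : exp 3 < 28 :=
    calc exp 3 = exp 1 ^ 3 := by rw [← exp_nat_mul]; norm_num
      _ < 3 ^ 3 := by gcongr; exact exp_one_lt_three
      _ < 28 := by norm_num
  have h3 : 3 < log T := (lt_log_iff_exp_lt (by linarith)).2 (by linarith)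
  exact (le_log_iff_exp_le (by linarith)).2 (by linarith [exp_one_lt_three])

theorem beta_type_integral_asymp (a b c d : ℕ) :
    ∃ C : ℝ, ∀ T : ℝ, 28 ≤ T →
      |(∫ u in (14:ℝ)..(T - 14),
            u ^ a * (T - u) ^ b * (Real.log u) ^ c * (Real.log (T - u)) ^ d) -
          ((a.factorial : ℝ) * b.factorial / (a + b + 1).factorial) * T ^ (a + b + 1) *
            (Real.log T) ^ (c + d)| ≤
        C * (((a.factorial : ℝ) * b.factorial / (a + b + 1).factorial) * T ^ (a + b + 1) *
            (Real.log T) ^ (c + d)) * (Real.log (Real.log T) / Real.log T) := by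
  set B := (a.factorial : ℝ) * b.factorial / (a + b + 1).factorial
  have hB : 0 < B := by positivity
  refine ⟨(2 * 14 + c + d) / B, fun T hT => ?_⟩
  have hL : 0 < log T := log_pos (by linarith)
  calc _ ≤ (2 * 14 + c + d) * T ^ (a + b + 1) * log T ^ (c + d) / log T :=
        abs_integral_pow_mul_log_pow_sub_le a b c d (by norm_num) (by linarith)
    _ ≤ (2 * 14 + c + d) * T ^ (a + b + 1) * log T ^ (c + d) * (log (log T) / log T) := by
        rw [mul_div_assoc']
        exact div_le_div_of_nonneg_right
          (le_mul_of_one_le_right (by positivity) (one_le_log_log hT)) hL.le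
    _ = (2 * 14 + c + d) / B * (B * T ^ (a + b + 1) * log T ^ (c + d)) *
          (log (log T) / log T) := by
        field_simp
end

section
/- Let c = c(T) be the unique positive solution of (3/4) log T = c³ T^c for large T. Then c = (4 log log T)/log T − (3 log log log T)/log T − log(256/3)/log T + o(1/log T), and consequently T^c ∼ 3 (log T)⁴ / (256 (log log T)³) as T → ∞. -/
open Real Filter Topology

/-!
Taking logarithms, `u = c log T` solves `u + 3 log u = 4 log log T + log (3/4)`. The map
`u ↦ u + k log u` (`k ≥ 0`) expands distances on `(0, ∞)`, so any `v` that solves the same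
equation up to `o(1)` satisfies `u - v = o(1)`. The candidate
`v = a x - k log x + b - k log a` for `u + k log u = a x + b` has error `k log (v / (a x)) → 0`.
Dividing by `log T` gives the expansion of `c`; exponentiating gives `T ^ c`.
-/

lemma abs_sub_le_abs_add_mul_log_sub {a b k : ℝ} (hk : 0 ≤ k) (ha : 0 < a) (hb : 0 < b) :
    |a - b| ≤ |a + k * log a - (b + k * log b)| := by
  rcases le_total a b with hab | hab
  · have := mul_le_mul_of_nonneg_left (log_le_log ha hab) hk
    rw [abs_of_nonpos (by linarith), abs_of_nonpos (by linarith)]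
    linarith
  · have := mul_le_mul_of_nonneg_left (log_le_log hb hab) hk
    rw [abs_of_nonneg (by linarith), abs_of_nonneg (by linarith)]
    linarith

lemma tendsto_sub_mul_log_add_div_mul_self {a : ℝ} (ha : a ≠ 0) (k d : ℝ) :
    Tendsto (fun x => (a * x - k * log x + d) / (a * x)) atTop (𝓝 1) := by
  have hlog : Tendsto (fun x => log x / x) atTop (𝓝 0) :=
    isLittleO_log_id_atTop.tendsto_div_nhds_zero
  have hlim := ((tendsto_const_nhds (x := (1 : ℝ))).sub (hlog.const_mul (k / a))).add
    (tendsto_inv_atTop_zero.const_mul (d / a))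
  rw [mul_zero, mul_zero, sub_zero, add_zero] at hlim
  refine hlim.congr' ?_
  filter_upwards [eventually_ne_atTop 0] with x hx
  field_simp

lemma tendsto_add_mul_log_sub_mul_log {a : ℝ} (ha : 0 < a) (b k : ℝ) :
    Tendsto (fun x => (a * x - k * log x + (b - k * log a))
        + k * log (a * x - k * log x + (b - k * log a)) - (a * x + b)) atTop (𝓝 0) := by
  have hratio := tendsto_sub_mul_log_add_div_mul_self ha.ne' k (b - k * log a)
  have hlim := ((continuousAt_log one_ne_zero).tendsto.comp hratio).const_mul k
  rw [log_one, mul_zero] at hlim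
  refine hlim.congr' ?_
  filter_upwards [hratio.eventually (eventually_gt_nhds one_pos), eventually_gt_atTop 0]
    with x hpos hx
  have hax : 0 < a * x := mul_pos ha hx
  have hv : 0 < a * x - k * log x + (b - k * log a) := (div_pos_iff_of_pos_right hax).mp hpos
  simp only [Function.comp_apply]
  rw [log_div hv.ne' hax.ne', log_mul ha.ne' hx.ne']
  ring

theorem tendsto_sub_of_add_mul_log_eq {α : Type*} {l : Filter α} {u x : α → ℝ} {a b k : ℝ}
    (ha : 0 < a) (hk : 0 ≤ k) (hx : Tendsto x l atTop)
    (hu : ∀ᶠ t in l, 0 < u t ∧ u t + k * log (u t) = a * x t + b) :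
    Tendsto (fun t => u t - (a * x t - k * log (x t) + (b - k * log a))) l (𝓝 0) := by
  have hv : ∀ᶠ t in l, 0 < a * x t - k * log (x t) + (b - k * log a) := by
    filter_upwards [hx.eventually
        ((tendsto_sub_mul_log_add_div_mul_self ha.ne' k (b - k * log a)).eventually
          (eventually_gt_nhds one_pos)),
      hx.eventually (eventually_gt_atTop 0)] with t hpos hxt
    exact (div_pos_iff_of_pos_right (mul_pos ha hxt)).mp hpos
  refine squeeze_zero_norm' ?_ (tendsto_zero_iff_norm_tendsto_zero.mp
    ((tendsto_add_mul_log_sub_mul_log ha b k).comp hx))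
  filter_upwards [hu, hv] with t ⟨hut, heq⟩ hvt
  rw [Real.norm_eq_abs, Real.norm_eq_abs, Function.comp_apply, ← heq,
    abs_sub_comm _ (u t + _)]
  exact abs_sub_le_abs_add_mul_log_sub hk hut hvt

lemma add_mul_log_mul_log_eq_of_mul_log_eq {A c T : ℝ} (n : ℕ) (hA : 0 < A) (hc : 0 < c)
    (hT : 1 < T) (h : A * log T = c ^ n * T ^ c) :
    c * log T + n * log (c * log T) = (n + 1) * log (log T) + log A := by
  have hlog := congrArg log h
  rw [log_mul hA.ne' (log_pos hT).ne',
    log_mul (pow_ne_zero n hc.ne') (rpow_pos_of_pos (by linarith) c).ne', log_pow,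
    log_rpow (by linarith)] at hlog
  rw [log_mul hc.ne' (log_pos hT).ne']
  linarith

lemma exp_mul_log_sub_mul_log_log_sub_log {y B : ℝ} (n m : ℕ) (hy : 0 < y) (hly : 0 < log y)
    (hB : 0 < B) : exp (n * log y - m * log (log y) - log B) = y ^ n / (B * log y ^ m) := by
  rw [exp_sub, exp_sub, exp_nat_mul, exp_nat_mul, exp_log hy, exp_log hly, exp_log hB]
  ring

lemma tendsto_mul_log_sub_of_mul_log_eq {c : ℝ → ℝ}
    (hc : ∀ᶠ T in atTop, 0 < c T ∧ (3 / 4) * log T = c T ^ 3 * T ^ c T) :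
    Tendsto (fun T => c T * log T
      - (4 * log (log T) - 3 * log (log (log T)) - log (256 / 3))) atTop (𝓝 0) := by
  have hconst : log (3 / 4) - 3 * log 4 = -log (256 / 3) := by
    rw [log_div (by norm_num) (by norm_num), log_div (by norm_num) (by norm_num),
      show (256 : ℝ) = 4 ^ 4 by norm_num, log_pow]
    push_cast; ring
  have hu : ∀ᶠ T in atTop, 0 < c T * log T ∧
      c T * log T + 3 * log (c T * log T) = 4 * log (log T) + log (3 / 4) := by
    filter_upwards [hc, eventually_gt_atTop 1] with T ⟨hcT, heq⟩ hT
    refine ⟨mul_pos hcT (log_pos hT), ?_⟩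
    have := add_mul_log_mul_log_eq_of_mul_log_eq 3 (by norm_num) hcT hT heq
    norm_num at this
    exact this
  refine (tendsto_sub_of_add_mul_log_eq (by norm_num) (by norm_num)
    (tendsto_log_atTop.comp tendsto_log_atTop) hu).congr fun T => ?_
  simp only [Function.comp_apply]
  rw [hconst]
  ring

theorem lambertW_solution_asymp (c : ℝ → ℝ)
    (hc : ∀ᶠ T in atTop, 0 < c T ∧ (3/4) * Real.log T = (c T) ^ 3 * T ^ (c T)) :
    (fun T : ℝ => c T - (4 * Real.log (Real.log T) / Real.log T
        - 3 * Real.log (Real.log (Real.log T)) / Real.log T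
        - Real.log (256 / 3) / Real.log T))
      =o[atTop] (fun T : ℝ => 1 / Real.log T) ∧
    Filter.Tendsto (fun T : ℝ => T ^ (c T) /
        (3 * (Real.log T) ^ 4 / (256 * (Real.log (Real.log T)) ^ 3)))
      atTop (nhds 1) := by
  have huv := tendsto_mul_log_sub_of_mul_log_eq hc
  have hL : Tendsto log atTop atTop := tendsto_log_atTop
  have hT : ∀ᶠ T in atTop, 1 < T ∧ 0 < log T ∧ 0 < log (log T) :=
    (eventually_gt_atTop 1).and ((hL.eventually_gt_atTop 0).and
      ((hL.comp hL).eventually_gt_atTop 0))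
  constructor
  · have hne : ∀ᶠ T in atTop, 1 / log T ≠ 0 := by
      filter_upwards [hT] with T ⟨_, hLT, _⟩
      positivity
    rw [Asymptotics.isLittleO_iff_tendsto' (hne.mono fun T h h0 => absurd h0 h)]
    refine huv.congr' ?_
    filter_upwards [hT] with T ⟨_, hLT, _⟩
    field_simp
  · have hexp := (continuous_exp.tendsto 0).comp huv
    rw [exp_zero] at hexp
    refine hexp.congr' ?_
    filter_upwards [hT] with T ⟨hT1, hLT, hLLT⟩
    have hden :=
      exp_mul_log_sub_mul_log_log_sub_log 4 3 hLT hLLT (by norm_num : (0 : ℝ) < 256 / 3)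
    push_cast at hden
    rw [Function.comp_apply, exp_sub, hden, rpow_def_of_pos (by linarith), mul_comm]
    field_simp
end
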